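/- In the finite phase-separated co-design model, fix behavior parameters θ₀ ∈ ℝ^m and φ₀ ∈ ℝ^n, and define the follower-side surrogate L_F(φ) = Σ_τ P(τ;θ₀,φ₀) · γ^T · Σ_{k=0}^{H−1} γ^k (π_F(φ)(b_k|x_k;s_T)/π_F(φ₀)(b_k|x_k;s_T)) · A_F^{φ₀,k}(x_k,b_k;s_T). Then the derivative of the leader objective with respect to the follower parameters equals the surrogate gradient at the behavior parameters: ∇_φ J_L(θ₀,φ)|_{φ=φ₀} = ∇_φ L_F(φ)|_{φ=φ₀}. -/

import Mathlib

open scoped BigOperators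

/-- A trajectory in the finite phase-separated co-design model, with leader horizon
`T + 1` (so `T + 1 ≥ 1`) and follower horizon `H + 1` (so `H + 1 ≥ 1`):
leader states `s 0, …, s (T+1)`, leader actions `a 0, …, a T`,
follower states `x 0, …, x H` and follower actions `b 0, …, b H`. -/
structure Traj (SL AL SF AF : Type) (T H : ℕ) where
  s : Fin (T + 2) → SL
  a : Fin (T + 1) → AL
  x : Fin (H + 1) → SF
  b : Fin (H + 1) → AF

instance instFintypeTraj (SL AL SF AF : Type) (T H : ℕ)
    [Fintype SL] [Fintype AL] [Fintype SF] [Fintype AF] :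
    Fintype (Traj SL AL SF AF T H) :=
  Fintype.ofEquiv
    ((Fin (T + 2) → SL) × (Fin (T + 1) → AL) × (Fin (H + 1) → SF) × (Fin (H + 1) → AF))
    { toFun := fun p => ⟨p.1, p.2.1, p.2.2.1, p.2.2.2⟩
      invFun := fun τ => ⟨τ.s, τ.a, τ.x, τ.b⟩
      left_inv := fun _ => rfl
      right_inv := fun _ => rfl }

variable {SL AL SF AF : Type} [Fintype SL] [Fintype AL] [Fintype SF] [Fintype AF]
variable {m n T H : ℕ}

/-- The terminal morphology `s_T` of a trajectory. -/
def Traj.z (τ : Traj SL AL SF AF T H) : SL := τ.s (Fin.last (T + 1))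

/-- Probability `P(τ; θ, φ)` of a trajectory. -/
def trajProb (μL : SL → ℝ) (PL : SL → AL → SL → ℝ) (μF : SL → SF → ℝ)
    (PF : SL → SF → AF → SF → ℝ) (πL : (Fin m → ℝ) → SL → AL → ℝ)
    (πF : (Fin n → ℝ) → SL → SF → AF → ℝ) (θ : Fin m → ℝ) (φ : Fin n → ℝ)
    (τ : Traj SL AL SF AF T H) : ℝ :=
  μL (τ.s 0) *
    (∏ t : Fin (T + 1),
      πL θ (τ.s t.castSucc) (τ.a t) * PL (τ.s t.castSucc) (τ.a t) (τ.s t.succ)) *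
    μF τ.z (τ.x 0) *
    (∏ k : Fin (H + 1), πF φ τ.z (τ.x k) (τ.b k)) *
    (∏ k : Fin H, PF τ.z (τ.x k.castSucc) (τ.b k.castSucc) (τ.x k.succ))

/-- Follower objective `J_F(θ, φ)`. -/
def JF (γ : ℝ) (μL : SL → ℝ) (PL : SL → AL → SL → ℝ) (μF : SL → SF → ℝ)
    (PF : SL → SF → AF → SF → ℝ) (RF : SL → SF → AF → ℝ)
    (πL : (Fin m → ℝ) → SL → AL → ℝ) (πF : (Fin n → ℝ) → SL → SF → AF → ℝ)
    (T H : ℕ) (θ : Fin m → ℝ) (φ : Fin n → ℝ) : ℝ :=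
  ∑ τ : Traj SL AL SF AF T H, trajProb μL PL μF PF πL πF θ φ τ *
    ∑ k : Fin (H + 1), γ ^ (k : ℕ) * RF τ.z (τ.x k) (τ.b k)

/-- Leader objective `J_L(θ, φ)`. -/
def JL (γ : ℝ) (μL : SL → ℝ) (PL : SL → AL → SL → ℝ) (μF : SL → SF → ℝ)
    (PF : SL → SF → AF → SF → ℝ) (RL : SL → AL → ℝ) (RF : SL → SF → AF → ℝ)
    (πL : (Fin m → ℝ) → SL → AL → ℝ) (πF : (Fin n → ℝ) → SL → SF → AF → ℝ)
    (T H : ℕ) (θ : Fin m → ℝ) (φ : Fin n → ℝ) : ℝ :=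
  ∑ τ : Traj SL AL SF AF T H, trajProb μL PL μF PF πL πF θ φ τ *
    ((∑ t : Fin (T + 1), γ ^ (t : ℕ) * RL (τ.s t.castSucc) (τ.a t)) +
      γ ^ (T + 1) * ∑ k : Fin (H + 1), γ ^ (k : ℕ) * RF τ.z (τ.x k) (τ.b k))

/-- Follower state-action value `Q_F^{φ,k}(x, b; z)`, written in terms of the number
`r` of remaining follower steps after the current one (at stage `k` of a follower
phase with horizon `H + 1`, one has `r = H - k`): the expectation of the discounted
reward-to-go `∑_{j = k}^{H} γ^{j - k} R_F(z, x_j, b_j)` over follower trajectories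
generated from `x, b` by `P_F(·|z,·,·)` and `π_F(φ)(·|·; z)`. -/
def Qrem (γ : ℝ) (PF : SL → SF → AF → SF → ℝ) (RF : SL → SF → AF → ℝ)
    (πF : (Fin n → ℝ) → SL → SF → AF → ℝ) (z : SL) (φ : Fin n → ℝ) :
    ℕ → SF → AF → ℝ
  | 0, x, b => RF z x b
  | r + 1, x, b => RF z x b +
      γ * ∑ x' : SF, PF z x b x' * ∑ b' : AF, πF φ z x' b' * Qrem γ PF RF πF z φ r x' b'

/-- Follower advantage `A_F^{φ,k}(x, b; z) = Q_F^{φ,k}(x, b; z) - V_F^{φ,k}(x; z)`,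
again indexed by the number `r = H - k` of remaining follower steps. -/
def advF (γ : ℝ) (PF : SL → SF → AF → SF → ℝ) (RF : SL → SF → AF → ℝ)
    (πF : (Fin n → ℝ) → SL → SF → AF → ℝ) (z : SL) (φ : Fin n → ℝ)
    (r : ℕ) (x : SF) (b : AF) : ℝ :=
  Qrem γ PF RF πF z φ r x b -
    ∑ b' : AF, πF φ z x b' * Qrem γ PF RF πF z φ r x b'

/-- Leader state-action value `Q_L^{θ,φ,t}(s, a)`, indexed by the number `r` of
remaining leader steps after the current one (at stage `t` of a leader phase with
horizon `T + 1`, one has `r = T - t`); the follower phase has horizon `H + 1`. -/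
def QLrem (γ : ℝ) (PL : SL → AL → SL → ℝ) (μF : SL → SF → ℝ)
    (PF : SL → SF → AF → SF → ℝ) (RL : SL → AL → ℝ) (RF : SL → SF → AF → ℝ)
    (πL : (Fin m → ℝ) → SL → AL → ℝ) (πF : (Fin n → ℝ) → SL → SF → AF → ℝ)
    (H : ℕ) (θ : Fin m → ℝ) (φ : Fin n → ℝ) : ℕ → SL → AL → ℝ
  | 0, s, a => RL s a + γ * ∑ z : SL, PL s a z *
      ∑ x : SF, μF z x * ∑ b : AF, πF φ z x b * Qrem γ PF RF πF z φ H x b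
  | r + 1, s, a => RL s a + γ * ∑ s' : SL, PL s a s' *
      ∑ a' : AL, πL θ s' a' * QLrem γ PL μF PF RL RF πL πF H θ φ r s' a'

/-- Leader advantage `A_L^{θ,φ,t}(s, a) = Q_L^{θ,φ,t}(s, a) - V_L^{θ,φ,t}(s)`,
indexed by the number `r = T - t` of remaining leader steps. -/
def advL (γ : ℝ) (PL : SL → AL → SL → ℝ) (μF : SL → SF → ℝ)
    (PF : SL → SF → AF → SF → ℝ) (RL : SL → AL → ℝ) (RF : SL → SF → AF → ℝ)
    (πL : (Fin m → ℝ) → SL → AL → ℝ) (πF : (Fin n → ℝ) → SL → SF → AF → ℝ)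
    (H : ℕ) (θ : Fin m → ℝ) (φ : Fin n → ℝ) (r : ℕ) (s : SL) (a : AL) : ℝ :=
  QLrem γ PL μF PF RL RF πL πF H θ φ r s a -
    ∑ a' : AL, πL θ s a' * QLrem γ PL μF PF RL RF πL πF H θ φ r s a'

/-! Differentiating `P(τ; θ₀, φ)` at `φ₀` in a direction `v` gives the score
`P(τ) ∑ₖ dₖ / πₖ`, where `dₖ = ∇πF(bₖ | xₖ; s_T) · v` sums to zero over actions. Both sides of
the identity are therefore sums over follower steps `k` of trajectory weights in which the `k`-th
policy factor is replaced by the signed weight `d`, and the claim is that the return and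
`γ^(T+1) γ^k A_k` have the same such weighted sum. Write the return as the rewards before step `k`
plus `γ^(T+1) γ^k` times the reward-to-go from `k`. By the Markov property the reward-to-go may be
replaced by `Q_k(x_k, b_k)`; what is left besides `γ^(T+1) γ^k A_k` is then a function of the
history up to `x_k` only (past rewards and `V_k(x_k)`), against which `d` integrates to zero. -/

open Finset

section PathSum

variable {S A : Type} (P : S → A → S → ℝ)

-- `w j` weighs the action at step `j`; it need not be a policy, since the score argument puts a
-- signed weight of total mass zero at one step.
def pathWeight {r : ℕ} (ν : S → ℝ) (w : Fin (r + 1) → S → A → ℝ)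
    (x : Fin (r + 1) → S) (b : Fin (r + 1) → A) : ℝ :=
  ν (x 0) * (∏ j, w j (x j) (b j)) * ∏ j : Fin r, P (x j.castSucc) (b j.castSucc) (x j.succ)

lemma pathWeight_cons {r : ℕ} (ν : S → ℝ) (w : Fin (r + 2) → S → A → ℝ) (x₀ : S) (b₀ : A)
    (x : Fin (r + 1) → S) (b : Fin (r + 1) → A) :
    pathWeight P ν w (Fin.cons x₀ x) (Fin.cons b₀ b) =
      ν x₀ * w 0 x₀ b₀ * pathWeight P (P x₀ b₀) (fun j => w j.succ) x b := by
  simp only [pathWeight, Fin.prod_univ_succ (n := r + 1), Fin.prod_univ_succ (n := r),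
    Fin.cons_zero, Fin.cons_succ, Fin.castSucc_zero, ← Fin.succ_castSucc]
  ring

variable [Fintype S] [Fintype A]

def pathSum {r : ℕ} (ν : S → ℝ) (w : Fin (r + 1) → S → A → ℝ)
    (G : (Fin (r + 1) → S) → (Fin (r + 1) → A) → ℝ) : ℝ :=
  ∑ x, ∑ b, pathWeight P ν w x b * G x b

lemma pathSum_zero (ν : S → ℝ) (w : Fin 1 → S → A → ℝ)
    (G : (Fin 1 → S) → (Fin 1 → A) → ℝ) :
    pathSum P ν w G = ∑ x₀, ∑ b₀, ν x₀ * w 0 x₀ b₀ * G (fun _ => x₀) (fun _ => b₀) := by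
  refine Fintype.sum_equiv (Equiv.funUnique (Fin 1) S) _ _ fun x => ?_
  refine Fintype.sum_equiv (Equiv.funUnique (Fin 1) A) _ _ fun b => ?_
  have hx : (fun _ : Fin 1 => x 0) = x := funext fun j => by rw [Subsingleton.elim j 0]
  have hb : (fun _ : Fin 1 => b 0) = b := funext fun j => by rw [Subsingleton.elim j 0]
  simp [pathWeight, hx, hb]

lemma sum_fin_succ_pi {α M : Type*} [Fintype α] [AddCommMonoid M] {r : ℕ}
    (F : (Fin (r + 1) → α) → M) :
    ∑ x, F x = ∑ x₀, ∑ x : Fin r → α, F (Fin.cons x₀ x) := by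
  rw [← (Fin.consEquiv fun _ => α).sum_comp F, Fintype.sum_prod_type]
  rfl

lemma pathSum_succ {r : ℕ} (ν : S → ℝ) (w : Fin (r + 2) → S → A → ℝ)
    (G : (Fin (r + 2) → S) → (Fin (r + 2) → A) → ℝ) :
    pathSum P ν w G = ∑ x₀, ∑ b₀, ν x₀ * w 0 x₀ b₀ *
      pathSum P (P x₀ b₀) (fun j => w j.succ) (fun x b => G (Fin.cons x₀ x) (Fin.cons b₀ b)) := by
  simp only [pathSum, sum_fin_succ_pi (r := r + 1), pathWeight_cons, mul_sum]
  refine sum_congr rfl fun x₀ _ => ?_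
  rw [sum_comm]
  refine sum_congr rfl fun b₀ _ => ?_
  simp only [mul_assoc]

end PathSum

lemma sum_pow_mul_fin_succ {R : Type*} [CommSemiring R] (γ : R) {r : ℕ} (f : Fin (r + 2) → R) :
    ∑ j : Fin (r + 2), γ ^ (j : ℕ) * f j = f 0 + γ * ∑ j : Fin (r + 1), γ ^ (j : ℕ) * f j.succ := by
  simp only [Fin.sum_univ_succ (n := r + 1), Fin.val_zero, pow_zero, one_mul, Fin.val_succ,
    pow_succ', mul_sum, mul_assoc]

section FollowerChain

variable {Z S A : Type} [Fintype S] [Fintype A] {γ : ℝ}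
  {PF : Z → S → A → S → ℝ} {RF : Z → S → A → ℝ} {πF : (Fin n → ℝ) → Z → S → A → ℝ}
  {z : Z} {φ : Fin n → ℝ}

lemma pathSum_head_add_return (hπ : ∀ x, ∑ b, πF φ z x b = 1)
    (hP : ∀ x b, ∑ x', PF z x b x' = 1) (r : ℕ) (ν : S → ℝ) (w : Fin (r + 1) → S → A → ℝ)
    (hw : ∀ j ≠ 0, w j = πF φ z) (g : S → A → ℝ) (c : ℝ) :
    pathSum (PF z) ν w
        (fun x b => g (x 0) (b 0) + c * ∑ j : Fin (r + 1), γ ^ (j : ℕ) * RF z (x j) (b j)) =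
      ∑ x₀, ∑ b₀, ν x₀ * w 0 x₀ b₀ * (g x₀ b₀ + c * Qrem γ PF RF πF z φ r x₀ b₀) := by
  induction r generalizing ν g c with
  | zero => simp [pathSum_zero, Qrem]
  | succ r ih =>
    rw [pathSum_succ]
    refine sum_congr rfl fun x₀ _ => sum_congr rfl fun b₀ _ => ?_
    simp only [sum_pow_mul_fin_succ, Fin.cons_zero, Fin.cons_succ, mul_add, ← mul_assoc,
      ← add_assoc]
    rw [ih (PF z x₀ b₀) (fun j => w j.succ) (fun j _ => hw j.succ (Fin.succ_ne_zero j))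
      (fun _ _ => g x₀ b₀ + c * RF z x₀ b₀) (c * γ)]
    have hsum : ∀ K, ∑ x', ∑ b', PF z x₀ b₀ x' * πF φ z x' b' *
        (K + c * γ * Qrem γ PF RF πF z φ r x' b') =
          K + c * γ * ∑ x', PF z x₀ b₀ x' * ∑ b', πF φ z x' b' * Qrem γ PF RF πF z φ r x' b' := by
      intro K
      simp only [mul_add, sum_add_distrib, ← sum_mul, mul_assoc, ← mul_sum, hπ, hP, one_mul]
      simp only [mul_sum, mul_left_comm]
    rw [hw _ (Fin.succ_ne_zero 0), hsum, Qrem]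
    ring

lemma pathSum_return_sub_advantage_zero_eq_zero (hπ : ∀ x, ∑ b, πF φ z x b = 1)
    (hP : ∀ x b, ∑ x', PF z x b x' = 1) (r : ℕ) (ν : S → ℝ)
    (w : Fin (r + 1) → S → A → ℝ) (hw : ∀ j ≠ 0, w j = πF φ z)
    (h0 : ∀ x, ∑ b, w 0 x b = 0) (C c : ℝ) :
    pathSum (PF z) ν w (fun x b => C + c * (∑ j : Fin (r + 1), γ ^ (j : ℕ) * RF z (x j) (b j) -
      γ ^ ((0 : Fin (r + 1)) : ℕ) * advF γ PF RF πF z φ (r - (0 : Fin (r + 1))) (x 0) (b 0))) =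
      0 := by
  have hG : (fun (x : Fin (r + 1) → S) (b : Fin (r + 1) → A) =>
      C + c * (∑ j : Fin (r + 1), γ ^ (j : ℕ) * RF z (x j) (b j) -
        γ ^ ((0 : Fin (r + 1)) : ℕ) * advF γ PF RF πF z φ (r - (0 : Fin (r + 1))) (x 0) (b 0))) =
      fun x b => (C - c * advF γ PF RF πF z φ r (x 0) (b 0)) +
        c * ∑ j : Fin (r + 1), γ ^ (j : ℕ) * RF z (x j) (b j) := by
    funext x b
    simp only [Fin.val_zero, pow_zero, one_mul, Nat.sub_zero]
    ring
  rw [hG, pathSum_head_add_return hπ hP r ν w hw (fun x₀ b₀ => C - c * advF γ PF RF πF z φ r x₀ b₀)]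
  -- the action-independent baseline `V` is all that survives, and `w 0` sums to zero against it
  refine sum_eq_zero fun x₀ _ => ?_
  have hV : ∀ b₀, ν x₀ * w 0 x₀ b₀ * (C - c * advF γ PF RF πF z φ r x₀ b₀ +
      c * Qrem γ PF RF πF z φ r x₀ b₀) = ν x₀ * (C + c * ∑ b, πF φ z x₀ b *
        Qrem γ PF RF πF z φ r x₀ b) * w 0 x₀ b₀ := by
    intro b₀
    rw [advF]
    ring
  rw [sum_congr rfl fun b₀ _ => hV b₀, ← mul_sum, h0, mul_zero]

lemma pathSum_return_sub_advantage_eq_zero (hπ : ∀ x, ∑ b, πF φ z x b = 1)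
    (hP : ∀ x b, ∑ x', PF z x b x' = 1) (r : ℕ) (k : Fin (r + 1)) (ν : S → ℝ)
    (w : Fin (r + 1) → S → A → ℝ) (hw : ∀ j, k < j → w j = πF φ z)
    (hk : ∀ x, ∑ b, w k x b = 0) (C c : ℝ) :
    pathSum (PF z) ν w (fun x b => C + c * (∑ j : Fin (r + 1), γ ^ (j : ℕ) * RF z (x j) (b j) -
      γ ^ (k : ℕ) * advF γ PF RF πF z φ (r - k) (x k) (b k))) = 0 := by
  induction r generalizing ν C c with
  | zero =>
    obtain rfl : k = 0 := Fin.fin_one_eq_zero k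
    exact pathSum_return_sub_advantage_zero_eq_zero hπ hP 0 ν w
      (fun j hj => hw j (Fin.pos_iff_ne_zero.mpr hj)) hk C c
  | succ r ih =>
    induction k using Fin.cases with
    | zero =>
      exact pathSum_return_sub_advantage_zero_eq_zero hπ hP _ ν w
        (fun j hj => hw j (Fin.pos_iff_ne_zero.mpr hj)) hk C c
    | succ i =>
      rw [pathSum_succ]
      refine sum_eq_zero fun x₀ _ => sum_eq_zero fun b₀ _ => mul_eq_zero_of_right _ ?_
      have hG : ∀ (x : Fin (r + 1) → S) (b : Fin (r + 1) → A),
          let x' : Fin (r + 2) → S := Fin.cons x₀ x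
          let b' : Fin (r + 2) → A := Fin.cons b₀ b
          C + c * (∑ j : Fin (r + 2), γ ^ (j : ℕ) * RF z (x' j) (b' j) -
            γ ^ ((i.succ : Fin (r + 2)) : ℕ) * advF γ PF RF πF z φ (r + 1 - i.succ)
              (x' i.succ) (b' i.succ)) =
          (C + c * RF z x₀ b₀) + c * γ * (∑ j : Fin (r + 1), γ ^ (j : ℕ) * RF z (x j) (b j) -
            γ ^ (i : ℕ) * advF γ PF RF πF z φ (r - i) (x i) (b i)) := by
        intro x b
        simp only [sum_pow_mul_fin_succ, Fin.cons_zero, Fin.cons_succ, Fin.val_succ,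
          Nat.add_sub_add_right, pow_succ']
        ring
      simp only [hG]
      exact ih i _ _ (fun j hj => hw j.succ (Fin.succ_lt_succ_iff.mpr hj)) hk _ _

end FollowerChain

section Trajectory

def leaderWeight (μL : SL → ℝ) (PL : SL → AL → SL → ℝ) (πL : (Fin m → ℝ) → SL → AL → ℝ)
    (θ : Fin m → ℝ) (s : Fin (T + 2) → SL) (a : Fin (T + 1) → AL) : ℝ :=
  μL (s 0) * ∏ t : Fin (T + 1), πL θ (s t.castSucc) (a t) * PL (s t.castSucc) (a t) (s t.succ)

def trajReturn (γ : ℝ) (RL : SL → AL → ℝ) (RF : SL → SF → AF → ℝ)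
    (τ : Traj SL AL SF AF T H) : ℝ :=
  (∑ t : Fin (T + 1), γ ^ (t : ℕ) * RL (τ.s t.castSucc) (τ.a t)) +
    γ ^ (T + 1) * ∑ k : Fin (H + 1), γ ^ (k : ℕ) * RF τ.z (τ.x k) (τ.b k)

lemma sum_traj {M : Type*} [AddCommMonoid M] (f : Traj SL AL SF AF T H → M) :
    ∑ τ, f τ = ∑ s, ∑ a, ∑ x, ∑ b, f ⟨s, a, x, b⟩ := by
  let e : (Fin (T + 2) → SL) × (Fin (T + 1) → AL) × (Fin (H + 1) → SF) × (Fin (H + 1) → AF) ≃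
      Traj SL AL SF AF T H :=
    ⟨fun p => ⟨p.1, p.2.1, p.2.2.1, p.2.2.2⟩, fun τ => (τ.s, τ.a, τ.x, τ.b), fun _ => rfl,
      fun _ => rfl⟩
  simp only [← e.sum_comp f, Fintype.sum_prod_type]
  rfl

variable (μL : SL → ℝ) (PL : SL → AL → SL → ℝ) (μF : SL → SF → ℝ)
  (PF : SL → SF → AF → SF → ℝ) (πL : (Fin m → ℝ) → SL → AL → ℝ)
  (πF : (Fin n → ℝ) → SL → SF → AF → ℝ) (θ : Fin m → ℝ) (φ : Fin n → ℝ)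

lemma sum_trajProb_score_mul_return_sub_advantage_eq_zero (γ : ℝ) (RL : SL → AL → ℝ)
    (RF : SL → SF → AF → ℝ) (hπ0 : ∀ z x b, πF φ z x b ≠ 0) (hπ1 : ∀ z x, ∑ b, πF φ z x b = 1)
    (hP1 : ∀ z x b, ∑ x', PF z x b x' = 1) (d : SL → SF → AF → ℝ)
    (hd : ∀ z x, ∑ b, d z x b = 0) (k : Fin (H + 1)) :
    ∑ τ : Traj SL AL SF AF T H, trajProb μL PL μF PF πL πF θ φ τ / πF φ τ.z (τ.x k) (τ.b k) *
      d τ.z (τ.x k) (τ.b k) * (trajReturn γ RL RF τ -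
        γ ^ (T + 1) * γ ^ (k : ℕ) * advF γ PF RF πF τ.z φ (H - k) (τ.x k) (τ.b k)) = 0 := by
  classical
  have hscore : ∀ τ : Traj SL AL SF AF T H,
      trajProb μL PL μF PF πL πF θ φ τ / πF φ τ.z (τ.x k) (τ.b k) * d τ.z (τ.x k) (τ.b k) =
        leaderWeight μL PL πL θ τ.s τ.a *
          pathWeight (PF τ.z) (μF τ.z) (Function.update (fun _ => πF φ τ.z) k (d τ.z)) τ.x τ.b := by
    intro τ
    have hprod : ∀ v : SF → AF → ℝ,
        ∏ j, Function.update (fun _ => πF φ τ.z) k v j (τ.x j) (τ.b j) =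
          v (τ.x k) (τ.b k) * ∏ j ∈ univ.erase k, πF φ τ.z (τ.x j) (τ.b j) := fun v => by
      rw [← mul_prod_erase univ _ (mem_univ k), Function.update_self]
      exact congrArg _ (prod_congr rfl fun j hj => by
        rw [Function.update_of_ne (ne_of_mem_erase hj)])
    have hπ := hprod (πF φ τ.z)
    simp only [Function.update_eq_self] at hπ
    have := hπ0 τ.z (τ.x k) (τ.b k)
    simp only [trajProb, leaderWeight, pathWeight, hπ, hprod]
    field_simp
  simp only [hscore, sum_traj]
  refine sum_eq_zero fun s _ => sum_eq_zero fun a _ => ?_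
  set z := s (Fin.last (T + 1))
  have hzero := pathSum_return_sub_advantage_eq_zero (γ := γ) (RF := RF) (hπ1 z) (hP1 z) H k
    (μF z) (Function.update (fun _ => πF φ z) k (d z))
    (fun j hj => Function.update_of_ne hj.ne' _ _)
    (by simpa only [Function.update_self] using hd z)
    (∑ t : Fin (T + 1), γ ^ (t : ℕ) * RL (s t.castSucc) (a t)) (γ ^ (T + 1))
  rw [← mul_zero (leaderWeight μL PL πL θ s a), ← hzero, pathSum, mul_sum]
  refine sum_congr rfl fun x _ => ?_
  rw [mul_sum]
  refine sum_congr rfl fun b _ => ?_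
  simp only [trajReturn, Traj.z]
  ring

lemma sum_trajReturn_mul_score_eq (γ : ℝ) (RL : SL → AL → ℝ) (RF : SL → SF → AF → ℝ)
    (hπ0 : ∀ z x b, πF φ z x b ≠ 0) (hπ1 : ∀ z x, ∑ b, πF φ z x b = 1)
    (hP1 : ∀ z x b, ∑ x', PF z x b x' = 1) (d : SL → SF → AF → ℝ)
    (hd : ∀ z x, ∑ b, d z x b = 0) :
    ∑ τ : Traj SL AL SF AF T H, trajReturn γ RL RF τ * ∑ k : Fin (H + 1),
        trajProb μL PL μF PF πL πF θ φ τ / πF φ τ.z (τ.x k) (τ.b k) * d τ.z (τ.x k) (τ.b k) =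
      ∑ τ : Traj SL AL SF AF T H, ∑ k : Fin (H + 1),
        trajProb μL PL μF PF πL πF θ φ τ * γ ^ (T + 1) * γ ^ (k : ℕ) *
          advF γ PF RF πF τ.z φ (H - k) (τ.x k) (τ.b k) / πF φ τ.z (τ.x k) (τ.b k) *
            d τ.z (τ.x k) (τ.b k) := by
  rw [← sub_eq_zero, ← sum_sub_distrib]
  calc _ = ∑ k : Fin (H + 1), ∑ τ : Traj SL AL SF AF T H,
        trajProb μL PL μF PF πL πF θ φ τ / πF φ τ.z (τ.x k) (τ.b k) * d τ.z (τ.x k) (τ.b k) *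
          (trajReturn γ RL RF τ -
            γ ^ (T + 1) * γ ^ (k : ℕ) * advF γ PF RF πF τ.z φ (H - k) (τ.x k) (τ.b k)) := by
        rw [sum_comm]
        refine sum_congr rfl fun τ _ => ?_
        rw [mul_sum, ← sum_sub_distrib]
        exact sum_congr rfl fun k _ => by ring
    _ = 0 := sum_eq_zero fun k _ =>
        sum_trajProb_score_mul_return_sub_advantage_eq_zero μL PL μF PF πL πF θ φ γ RL RF
          hπ0 hπ1 hP1 d hd k

end Trajectory

noncomputable def followerSurrogate (γ : ℝ) (μL : SL → ℝ) (PL : SL → AL → SL → ℝ) (μF : SL → SF → ℝ)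
    (PF : SL → SF → AF → SF → ℝ) (RF : SL → SF → AF → ℝ)
    (πL : (Fin m → ℝ) → SL → AL → ℝ) (πF : (Fin n → ℝ) → SL → SF → AF → ℝ)
    (T H : ℕ) (θ₀ : Fin m → ℝ) (φ₀ φ : Fin n → ℝ) : ℝ :=
  ∑ τ : Traj SL AL SF AF T H,
    trajProb μL PL μF PF πL πF θ₀ φ₀ τ *
      (γ ^ (T + 1) *
        ∑ k : Fin (H + 1), γ ^ (k : ℕ) *
          (πF φ τ.z (τ.x k) (τ.b k) / πF φ₀ τ.z (τ.x k) (τ.b k)) *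
          advF γ PF RF πF τ.z φ₀ (H - (k : ℕ)) (τ.x k) (τ.b k))

lemma sum_eq_zero_of_hasFDerivAt_of_sum_const {ι 𝕜 E F : Type*} [Fintype ι]
    [NontriviallyNormedField 𝕜] [NormedAddCommGroup E] [NormedSpace 𝕜 E]
    [NormedAddCommGroup F] [NormedSpace 𝕜 F] {f : ι → E → F} {f' : ι → E →L[𝕜] F} {x : E}
    (hf : ∀ i, HasFDerivAt (f i) (f' i) x) {c : F} (hc : ∀ y, ∑ i, f i y = c) :
    ∑ i, f' i = 0 := by
  have h := HasFDerivAt.fun_sum (u := univ) fun i _ => hf i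
  simp only [hc] at h
  exact h.unique (hasFDerivAt_const c x)

section Derivative

variable (γ : ℝ) (μL : SL → ℝ) (PL : SL → AL → SL → ℝ) (μF : SL → SF → ℝ)
  (PF : SL → SF → AF → SF → ℝ) (RL : SL → AL → ℝ) (RF : SL → SF → AF → ℝ)
  (πL : (Fin m → ℝ) → SL → AL → ℝ) (πF : (Fin n → ℝ) → SL → SF → AF → ℝ) (T H : ℕ)
  (θ : Fin m → ℝ) {φ₀ : Fin n → ℝ} {D : SL → SF → AF → (Fin n → ℝ) →L[ℝ] ℝ}

lemma hasFDerivAt_JL (hD : ∀ z x b, HasFDerivAt (fun φ => πF φ z x b) (D z x b) φ₀)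
    (hπ0 : ∀ z x b, πF φ₀ z x b ≠ 0) :
    HasFDerivAt (fun φ => JL γ μL PL μF PF RL RF πL πF T H θ φ)
      (∑ τ : Traj SL AL SF AF T H, trajReturn γ RL RF τ • ∑ k : Fin (H + 1),
        (trajProb μL PL μF PF πL πF θ φ₀ τ / πF φ₀ τ.z (τ.x k) (τ.b k)) •
          D τ.z (τ.x k) (τ.b k)) φ₀ := by
  classical
  refine HasFDerivAt.fun_sum fun τ _ => ?_
  have hprod := HasFDerivAt.finsetProd (u := univ) fun k _ => hD τ.z (τ.x k) (τ.b k)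
  refine (((hprod.const_mul (μL (τ.s 0) * (∏ t : Fin (T + 1), πL θ (τ.s t.castSucc) (τ.a t) *
      PL (τ.s t.castSucc) (τ.a t) (τ.s t.succ)) * μF τ.z (τ.x 0))).mul_const
    (∏ k : Fin H, PF τ.z (τ.x k.castSucc) (τ.b k.castSucc) (τ.x k.succ))).mul_const
    (trajReturn γ RL RF τ)).congr_fderiv ?_
  simp only [smul_sum, smul_smul]
  refine sum_congr rfl fun k _ => ?_
  congr 2
  have := hπ0 τ.z (τ.x k) (τ.b k)
  rw [trajProb, ← mul_prod_erase univ _ (mem_univ k)]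
  field_simp

lemma hasFDerivAt_followerSurrogate (hD : ∀ z x b, HasFDerivAt (fun φ => πF φ z x b) (D z x b) φ₀) :
    HasFDerivAt (followerSurrogate γ μL PL μF PF RF πL πF T H θ φ₀)
      (∑ τ : Traj SL AL SF AF T H, ∑ k : Fin (H + 1),
        (trajProb μL PL μF PF πL πF θ φ₀ τ * γ ^ (T + 1) * γ ^ (k : ℕ) *
          advF γ PF RF πF τ.z φ₀ (H - k) (τ.x k) (τ.b k) / πF φ₀ τ.z (τ.x k) (τ.b k)) •
            D τ.z (τ.x k) (τ.b k)) φ₀ := by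
  have hL : followerSurrogate γ μL PL μF PF RF πL πF T H θ φ₀ = fun φ =>
      ∑ τ : Traj SL AL SF AF T H, ∑ k : Fin (H + 1),
        (trajProb μL PL μF PF πL πF θ φ₀ τ * γ ^ (T + 1) * γ ^ (k : ℕ) *
          advF γ PF RF πF τ.z φ₀ (H - k) (τ.x k) (τ.b k) / πF φ₀ τ.z (τ.x k) (τ.b k)) *
            πF φ τ.z (τ.x k) (τ.b k) := by
    funext φ
    refine sum_congr rfl fun τ _ => ?_
    simp only [mul_sum]
    exact sum_congr rfl fun k _ => by ring
  rw [hL]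
  exact HasFDerivAt.fun_sum fun τ _ => HasFDerivAt.fun_sum fun k _ =>
    (hD τ.z (τ.x k) (τ.b k)).const_mul _

end Derivative

theorem follower_side_gradient_surrogate_general
    {SL AL SF AF : Type} [Fintype SL] [Fintype AL] [Fintype SF] [Fintype AF]
    {m n T H : ℕ} (γ : ℝ) (μL : SL → ℝ) (PL : SL → AL → SL → ℝ) (μF : SL → SF → ℝ)
    (PF : SL → SF → AF → SF → ℝ) (hPF1 : ∀ z x b, ∑ x' : SF, PF z x b x' = 1)
    (RL : SL → AL → ℝ) (RF : SL → SF → AF → ℝ) (πL : (Fin m → ℝ) → SL → AL → ℝ)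
    (πF : (Fin n → ℝ) → SL → SF → AF → ℝ) (hπF0 : ∀ φ z x b, 0 < πF φ z x b)
    (hπF1 : ∀ φ z x, ∑ b : AF, πF φ z x b = 1)
    (hπFC : ∀ z x b, ContDiff ℝ 2 fun φ : Fin n → ℝ => πF φ z x b)
    (θ₀ : Fin m → ℝ) (φ₀ : Fin n → ℝ) :
    fderiv ℝ (fun φ : Fin n → ℝ => JL γ μL PL μF PF RL RF πL πF T H θ₀ φ) φ₀
      =
    fderiv ℝ (fun φ : Fin n → ℝ =>
        ∑ τ : Traj SL AL SF AF T H,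
          trajProb μL PL μF PF πL πF θ₀ φ₀ τ *
            (γ ^ (T + 1) *
              ∑ k : Fin (H + 1), γ ^ (k : ℕ) *
                (πF φ τ.z (τ.x k) (τ.b k) / πF φ₀ τ.z (τ.x k) (τ.b k)) *
                advF γ PF RF πF τ.z φ₀ (H - (k : ℕ)) (τ.x k) (τ.b k))) φ₀ := by
  have hD : ∀ z x b, HasFDerivAt (fun φ => πF φ z x b)
      (fderiv ℝ (fun φ => πF φ z x b) φ₀) φ₀ := fun z x b =>
    ((hπFC z x b).differentiable (by norm_num)).differentiableAt.hasFDerivAt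
  have hπ0 : ∀ z x b, πF φ₀ z x b ≠ 0 := fun z x b => (hπF0 φ₀ z x b).ne'
  change _ = fderiv ℝ (followerSurrogate γ μL PL μF PF RF πL πF T H θ₀ φ₀) φ₀
  rw [(hasFDerivAt_JL γ μL PL μF PF RL RF πL πF T H θ₀ hD hπ0).fderiv,
    (hasFDerivAt_followerSurrogate γ μL PL μF PF RF πL πF T H θ₀ hD).fderiv]
  ext v
  simp only [_root_.sum_apply, smul_apply, smul_eq_mul]
  exact sum_trajReturn_mul_score_eq μL PL μF PF πL πF θ₀ φ₀ γ RL RF hπ0 (hπF1 φ₀) hPF1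
    (fun z x b => fderiv ℝ (fun φ => πF φ z x b) φ₀ v) fun z x => by
      rw [← _root_.sum_apply, sum_eq_zero_of_hasFDerivAt_of_sum_const (hD z x)
        (hπF1 · z x), zero_apply]

/-- The derivative of the leader objective with respect to the
follower parameters, `∇_φ J_L(θ₀, φ)|_{φ = φ₀}`, equals the gradient of the
follower-side surrogate `L_F` at the behavior parameters. -/
theorem follower_side_gradient_surrogate
    {SL AL SF AF : Type} [Fintype SL] [Fintype AL] [Fintype SF] [Fintype AF]
    [Nonempty SL] [Nonempty AL] [Nonempty SF] [Nonempty AF]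
    {m n T H : ℕ} (γ : ℝ) (hγ0 : 0 < γ) (hγ1 : γ ≤ 1)
    (μL : SL → ℝ) (hμL0 : ∀ s, 0 ≤ μL s) (hμL1 : ∑ s : SL, μL s = 1)
    (PL : SL → AL → SL → ℝ) (hPL0 : ∀ s a s', 0 ≤ PL s a s')
    (hPL1 : ∀ s a, ∑ s' : SL, PL s a s' = 1)
    (μF : SL → SF → ℝ) (hμF0 : ∀ z x, 0 ≤ μF z x) (hμF1 : ∀ z, ∑ x : SF, μF z x = 1)
    (PF : SL → SF → AF → SF → ℝ) (hPF0 : ∀ z x b x', 0 ≤ PF z x b x')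
    (hPF1 : ∀ z x b, ∑ x' : SF, PF z x b x' = 1)
    (RL : SL → AL → ℝ) (RF : SL → SF → AF → ℝ)
    (πL : (Fin m → ℝ) → SL → AL → ℝ) (hπL0 : ∀ θ s a, 0 < πL θ s a)
    (hπL1 : ∀ θ s, ∑ a : AL, πL θ s a = 1)
    (hπLC : ∀ s a, ContDiff ℝ 2 fun θ : Fin m → ℝ => πL θ s a)
    (πF : (Fin n → ℝ) → SL → SF → AF → ℝ) (hπF0 : ∀ φ z x b, 0 < πF φ z x b)
    (hπF1 : ∀ φ z x, ∑ b : AF, πF φ z x b = 1)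
    (hπFC : ∀ z x b, ContDiff ℝ 2 fun φ : Fin n → ℝ => πF φ z x b)
    (θ₀ : Fin m → ℝ) (φ₀ : Fin n → ℝ) :
    fderiv ℝ (fun φ : Fin n → ℝ => JL γ μL PL μF PF RL RF πL πF T H θ₀ φ) φ₀
      =
    fderiv ℝ (fun φ : Fin n → ℝ =>
        ∑ τ : Traj SL AL SF AF T H,
          trajProb μL PL μF PF πL πF θ₀ φ₀ τ *
            (γ ^ (T + 1) *
              ∑ k : Fin (H + 1), γ ^ (k : ℕ) *
                (πF φ τ.z (τ.x k) (τ.b k) / πF φ₀ τ.z (τ.x k) (τ.b k)) *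
                advF γ PF RF πF τ.z φ₀ (H - (k : ℕ)) (τ.x k) (τ.b k))) φ₀ :=
  follower_side_gradient_surrogate_general γ μL PL μF PF hPF1 RL RF πL πF hπF0 hπF1 hπFC θ₀ φ₀
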